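/- Let r be a positive integer and let p be a real number with 1/2 < p ≤ 1. Let W be a binomial random variable with parameters r and p, i.e. P(W = k) = C(r,k) p^k (1-p)^{r-k} for 0 ≤ k ≤ r. Then the probability of a correct majority vote satisfies P(W ≥ r/2) ≥ p + (1-p)·(1 - exp(-(p - 1/2)^2 · log r)); equivalently, ∑_{k : r/2 ≤ k ≤ r} C(r,k) p^k (1-p)^{r-k} ≥ p + (1-p)·(1 - r^{-(p-1/2)^2}). -/

import Mathlib

/-!
Only the lower tail `2k < r` has to be controlled, since the whole binomial mass is `1`. Writing
`q = 1 - p` and `x = exp (-2 (p - 1/2)²) / 2`, one has `p q ≤ x²` (as `4pq = 1 - 4(p - 1/2)²`)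
and `q ≤ x`, so each lower-tail term satisfies `p^k q^(r-k) = q (pq)^k q^(r-1-2k) ≤ q x^(r-1)`.
By the symmetry `C(r,k) = C(r,r-k)` the binomial coefficients of the lower tail sum to at most
`2^(r-1)`, so the lower tail is at most `q (2x)^(r-1) = q exp (-2 (p - 1/2)² (r-1))`, and `log r ≤ r - 1`.
-/

open Finset Real

theorem two_mul_sum_choose_lower_half_le (r : ℕ) :
    2 * ∑ k ∈ (range (r + 1)).filter (fun k => 2 * k < r), r.choose k ≤ 2 ^ r := by
  have hsymm : ∑ k ∈ (range (r + 1)).filter (fun k => 2 * k < r), r.choose k =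
      ∑ k ∈ (range (r + 1)).filter (fun k => r < 2 * k), r.choose k := by
    rw [sum_filter, sum_filter, ← sum_range_reflect]
    refine sum_congr rfl fun k hk => ?_
    rw [mem_range] at hk
    rw [Nat.add_sub_cancel, Nat.choose_symm (by omega)]
    exact if_congr (by omega) rfl rfl
  have hupper : ∑ k ∈ (range (r + 1)).filter (fun k => r < 2 * k), r.choose k ≤
      ∑ k ∈ (range (r + 1)).filter (fun k => ¬ 2 * k < r), r.choose k :=
    sum_le_sum_of_subset (monotone_filter_right _ fun k hk => by omega)
  calc 2 * ∑ k ∈ (range (r + 1)).filter (fun k => 2 * k < r), r.choose k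
      ≤ ∑ k ∈ (range (r + 1)).filter (fun k => 2 * k < r), r.choose k +
          ∑ k ∈ (range (r + 1)).filter (fun k => ¬ 2 * k < r), r.choose k := by omega
    _ = 2 ^ r := by rw [sum_filter_add_sum_filter_not, Nat.sum_range_choose]

theorem sum_choose_lower_half_le (r : ℕ) :
    ∑ k ∈ (range (r + 1)).filter (fun k => 2 * k < r), (r.choose k : ℝ) ≤ 2 ^ (r - 1) := by
  have h := two_mul_sum_choose_lower_half_le r
  rcases r with _ | r
  · simp
  · rw [pow_succ] at h
    exact_mod_cast (show _ ≤ 2 ^ r by omega)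

theorem pow_mul_pow_sub_le_of_two_mul_lt {p q x : ℝ} (hp : 0 ≤ p) (hq : 0 ≤ q)
    (hpq : p * q ≤ x ^ 2) (hqx : q ≤ x) {k r : ℕ} (hkr : 2 * k < r) :
    p ^ k * q ^ (r - k) ≤ q * x ^ (r - 1) := by
  obtain ⟨j, rfl⟩ : ∃ j, r = 2 * k + j + 1 := ⟨r - 2 * k - 1, by omega⟩
  rw [show 2 * k + j + 1 - k = k + j + 1 by omega, show 2 * k + j + 1 - 1 = 2 * k + j by omega]
  calc p ^ k * q ^ (k + j + 1) = q * ((p * q) ^ k * q ^ j) := by ring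
    _ ≤ q * ((x ^ 2) ^ k * x ^ j) := by gcongr
    _ = q * x ^ (2 * k + j) := by ring

theorem sum_lower_half_choose_mul_pow_mul_pow_le {p q x : ℝ} (hp : 0 ≤ p) (hq : 0 ≤ q)
    (hpq : p * q ≤ x ^ 2) (hqx : q ≤ x) (r : ℕ) :
    ∑ k ∈ (range (r + 1)).filter (fun k => 2 * k < r), (r.choose k : ℝ) * p ^ k * q ^ (r - k) ≤
      q * (2 * x) ^ (r - 1) := by
  calc ∑ k ∈ (range (r + 1)).filter (fun k => 2 * k < r), (r.choose k : ℝ) * p ^ k * q ^ (r - k)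
      ≤ ∑ k ∈ (range (r + 1)).filter (fun k => 2 * k < r), (r.choose k : ℝ) * (q * x ^ (r - 1)) :=
        sum_le_sum fun k hk => by
          rw [mul_assoc]
          exact mul_le_mul_of_nonneg_left
            (pow_mul_pow_sub_le_of_two_mul_lt hp hq hpq hqx (mem_filter.mp hk).2) (Nat.cast_nonneg _)
    _ ≤ 2 ^ (r - 1) * (q * x ^ (r - 1)) := by
        rw [← sum_mul]
        gcongr
        · exact mul_nonneg hq (pow_nonneg (hq.trans hqx) _)
        · exact sum_choose_lower_half_le r
    _ = q * (2 * x) ^ (r - 1) := by ring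

theorem sum_range_choose_mul_pow_mul_one_sub_pow (p : ℝ) (r : ℕ) :
    ∑ k ∈ range (r + 1), (r.choose k : ℝ) * p ^ k * (1 - p) ^ (r - k) = 1 := by
  have h := (add_pow p (1 - p) r).symm
  rw [add_sub_cancel, one_pow] at h
  exact (sum_congr rfl fun k _ => by ring).trans h

theorem mul_one_sub_le_sq_exp (p : ℝ) : p * (1 - p) ≤ (exp (-2 * (p - 1 / 2) ^ 2) / 2) ^ 2 := by
  rw [div_pow, ← exp_nat_mul]
  nlinarith [add_one_le_exp ((2 : ℕ) * (-2 * (p - 1 / 2) ^ 2))]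

theorem one_sub_le_exp {p : ℝ} (hp : 1 / 2 ≤ p) (hp1 : p ≤ 1) :
    1 - p ≤ exp (-2 * (p - 1 / 2) ^ 2) / 2 := by
  nlinarith [add_one_le_exp (-2 * (p - 1 / 2) ^ 2)]

theorem log_natCast_le_natCast_sub_one (n : ℕ) : log n ≤ ((n - 1 : ℕ) : ℝ) := by
  rcases n with _ | n
  · simp
  · simpa using log_le_sub_one_of_pos (Nat.cast_add_one_pos n)

theorem majority_vote_bound_general (r : ℕ) (p : ℝ) (hp : 1 / 2 < p) (hp1 : p ≤ 1) :
    p + (1 - p) * (1 - Real.exp (-(p - 1 / 2) ^ 2 * Real.log r)) ≤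
      ∑ k ∈ (Finset.range (r + 1)).filter (fun k : ℕ => (r : ℝ) / 2 ≤ (k : ℝ)),
        (r.choose k : ℝ) * p ^ k * (1 - p) ^ (r - k) := by
  have hlower : ∑ k ∈ (range (r + 1)).filter (fun k => 2 * k < r),
      (r.choose k : ℝ) * p ^ k * (1 - p) ^ (r - k) ≤
        (1 - p) * exp (-(p - 1 / 2) ^ 2 * log r) := by
    calc _ ≤ (1 - p) * (2 * (exp (-2 * (p - 1 / 2) ^ 2) / 2)) ^ (r - 1) :=
          sum_lower_half_choose_mul_pow_mul_pow_le (by linarith) (by linarith)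
            (mul_one_sub_le_sq_exp p) (one_sub_le_exp hp.le hp1) r
      _ = (1 - p) * exp (((r - 1 : ℕ) : ℝ) * (-2 * (p - 1 / 2) ^ 2)) := by
          rw [mul_div_cancel₀ _ two_ne_zero, exp_nat_mul]
      _ ≤ (1 - p) * exp (-(p - 1 / 2) ^ 2 * log r) := by
          gcongr _ * exp ?_
          linarith [mul_le_mul_of_nonneg_left (log_natCast_le_natCast_sub_one r)
            (sq_nonneg (p - 1 / 2)), mul_nonneg (sq_nonneg (p - 1 / 2)) (Nat.cast_nonneg (r - 1))]
  have hfilter : (range (r + 1)).filter (fun k : ℕ => ¬ (r : ℝ) / 2 ≤ (k : ℝ)) =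
      (range (r + 1)).filter (fun k => 2 * k < r) :=
    filter_congr fun k _ => by rw [not_le, lt_div_iff₀ two_pos]; norm_cast; omega
  have hsplit := sum_filter_add_sum_filter_not (range (r + 1))
    (fun k : ℕ => (r : ℝ) / 2 ≤ (k : ℝ)) (fun k => (r.choose k : ℝ) * p ^ k * (1 - p) ^ (r - k))
  rw [sum_range_choose_mul_pow_mul_one_sub_pow, hfilter] at hsplit
  linarith

/-- Binomial majority-voting bound (Lemma 4): if `W ~ Binomial(r, p)` with `1/2 < p ≤ 1`,
then `P(W ≥ r/2) ≥ p + (1-p)·(1 - exp(-(p - 1/2)² · log r))`. -/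
theorem majority_vote_bound (r : ℕ) (hr : 1 ≤ r) (p : ℝ) (hp : 1 / 2 < p) (hp1 : p ≤ 1) :
    p + (1 - p) * (1 - Real.exp (-(p - 1 / 2) ^ 2 * Real.log r)) ≤
      ∑ k ∈ (Finset.range (r + 1)).filter (fun k : ℕ => (r : ℝ) / 2 ≤ (k : ℝ)),
        (r.choose k : ℝ) * p ^ k * (1 - p) ^ (r - k) :=
  majority_vote_bound_general r p hp hp1
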